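/- Let F be a finite field and E an extension field of F, let n be a positive integer, α ∈ E of multiplicative order exactly n, and b an integer. Let h, f ∈ F[X] with f(0) ≠ 0 and u := deg f, and let a_j ∈ F be the j-th coefficient of the formal power series h/f ∈ F[[X]]. Let e ∈ F[X] with deg e < n have support set 𝓔 of size t, let μ ≥ 2, and define S(X) = Σ_{j=0}^{μ−2} a_j e(α^{b+j}) X^j, Λ(X) = ∏_{i∈𝓔} f(α^i X), Ω(X) = Σ_{i∈𝓔} e_i α^{i b} h(α^i X) ∏_{j∈𝓔, j≠i} f(α^j X), all in E[X]. Suppose deg h < u and t·u ≤ ⌊(μ−1)/2⌋. Then for any polynomials λ, ω ∈ E[X] with λ ≠ 0, deg λ ≤ ⌊(μ−1)/2⌋, deg ω < deg λ, and X^{μ−1} dividing λ(X)·S(X) − ω(X), one has λ(X)·Ω(X) = ω(X)·Λ(X). -/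

import Mathlib

open Polynomial

/-- The polynomial `f(γ·X)`: map the coefficients along `φ` and substitute `γ·X` for `X`. -/
noncomputable def polySubst {F E : Type*} [CommRing F] [CommRing E]
    (φ : F →+* E) (f : Polynomial F) (γ : E) : Polynomial E :=
  (f.map φ).comp (Polynomial.C γ * Polynomial.X)

/-!
Let `A ∈ E⟦X⟧` be the image of `h / f` and `T := ∑_{i ∈ 𝓔} e_i α^{ib} A(α^i X)`. Rescaling
`A · f = h` gives `A(γX) · f(γX) = h(γX)`, so `Λ T = Ω`; and the coefficient of `X^j` in `T` is
`a_j e(α^{b+j})`, so `S ≡ T` and hence `Λ S ≡ Ω` modulo `X^{μ-1}`. Then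
`λ Ω - ω Λ = Λ (λ S - ω) - λ (Λ S - Ω)` is divisible by `X^{μ-1}`, while the degree bounds make its
degree smaller than `2 ⌊(μ-1)/2⌋ ≤ μ - 1`; so it vanishes.
-/

namespace Polynomial

theorem coeff_sum_range_C_mul_X_pow {R : Type*} [Semiring R] (c : ℕ → R) {m j : ℕ} (hj : j < m) :
    (∑ k ∈ Finset.range m, C (c k) * X ^ k).coeff j = c j := by
  simp [finsetSum_coeff, hj]

theorem X_pow_dvd_iff_coe {R : Type*} [CommSemiring R] {p : R[X]} {m : ℕ} :
    X ^ m ∣ p ↔ PowerSeries.X ^ m ∣ (p : PowerSeries R) := by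
  simp only [X_pow_dvd_iff, PowerSeries.X_pow_dvd_iff, coeff_coe]

theorem degree_mul_lt_of_le_of_lt {R : Type*} [Semiring R] {p q : R[X]} {a b : ℕ}
    (hp : p.degree ≤ a) (hq : q.degree < b) : (p * q).degree < (a + b : ℕ) := by
  rcases eq_or_ne p 0 with rfl | hp0
  · simp
  refine (degree_mul_le _ _).trans_lt ?_
  exact_mod_cast WithBot.add_lt_add_of_le_of_lt (degree_ne_bot.2 hp0) hp hq

theorem mul_eq_mul_of_X_pow_dvd_sub {K : Type*} [Field K] {S Λ Ω lam om : K[X]} {m N : ℕ}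
    (hN : 2 * N ≤ m) (hΛ : Λ.degree ≤ N) (hΩ : Ω.degree < N) (hlam : lam.degree ≤ N)
    (hom : om.degree < N) (hΛΩ : X ^ m ∣ Λ * S - Ω) (hlamom : X ^ m ∣ lam * S - om) :
    lam * Ω = om * Λ := by
  have hdvd : X ^ m ∣ lam * Ω - om * Λ := by
    have : lam * Ω - om * Λ = Λ * (lam * S - om) - lam * (Λ * S - Ω) := by ring
    rw [this]
    exact dvd_sub (hlamom.mul_left _) (hΛΩ.mul_left _)
  have hdeg : (lam * Ω - om * Λ).degree < (X ^ m : K[X]).degree := by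
    rw [degree_X_pow]
    refine (degree_sub_le _ _).trans_lt (max_lt ?_ ?_) <;>
      refine lt_of_lt_of_le ?_ (WithBot.coe_le_coe.2 (two_mul N ▸ hN))
    · exact degree_mul_lt_of_le_of_lt hlam hΩ
    · rw [mul_comm]
      exact degree_mul_lt_of_le_of_lt hΛ hom
  exact sub_eq_zero.1 (eq_zero_of_dvd_of_degree_lt hdvd hdeg)

theorem eval_map_zpow_add {F E : Type*} [CommRing F] [Field E] (φ : F →+* E) (e : F[X]) {α : E}
    (hα : α ≠ 0) (b : ℤ) (j : ℕ) :
    (e.map φ).eval (α ^ (b + j)) =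
      ∑ i ∈ e.support, φ (e.coeff i) * α ^ ((i : ℤ) * b) * (α ^ (i : ℤ)) ^ j := by
  rw [eval_map, eval₂_eq_sum, sum_def]
  refine Finset.sum_congr rfl fun i _ => ?_
  rw [mul_assoc, ← zpow_natCast, ← zpow_mul, ← zpow_natCast _ j, ← zpow_mul, ← zpow_add₀ hα]
  ring_nf

end Polynomial

theorem PowerSeries.coeff_sum_C_mul_rescale {R ι : Type*} [CommRing R] (s : Finset ι)
    (c γ : ι → R) (B : PowerSeries R) (j : ℕ) :
    coeff j (∑ i ∈ s, C (c i) * rescale (γ i) B) = (∑ i ∈ s, c i * γ i ^ j) * coeff j B := by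
  simp only [map_sum, coeff_C_mul, coeff_rescale, Finset.sum_mul, mul_assoc]

section PolySubst

variable {F E : Type*} [CommRing F] [CommRing E] (φ : F →+* E)

theorem coe_polySubst (f : F[X]) (γ : E) :
    (polySubst φ f γ : PowerSeries E) = PowerSeries.rescale γ (PowerSeries.map φ f) := by
  ext n
  simp only [polySubst, coeff_coe, comp_C_mul_X_coeff, PowerSeries.coeff_rescale,
    PowerSeries.coeff_map, coeff_map]
  exact mul_comm _ _

theorem natDegree_polySubst_le (f : F[X]) (γ : E) :
    (polySubst φ f γ).natDegree ≤ f.natDegree := by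
  unfold polySubst
  refine natDegree_comp_le.trans ?_
  calc (f.map φ).natDegree * (C γ * X).natDegree ≤ f.natDegree * 1 :=
        Nat.mul_le_mul natDegree_map_le ((natDegree_C_mul_le _ _).trans natDegree_X_le)
    _ = f.natDegree := mul_one _

theorem natDegree_prod_polySubst_le {ι : Type*} (s : Finset ι) (f : F[X]) (γ : ι → E) :
    (∏ i ∈ s, polySubst φ f (γ i)).natDegree ≤ s.card * f.natDegree := by
  refine (natDegree_prod_le _ _).trans ?_
  simpa using Finset.sum_le_card_nsmul s _ _ fun i _ => natDegree_polySubst_le φ f (γ i)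

theorem degree_sum_mul_prod_erase_polySubst_lt {ι : Type*} [DecidableEq ι] {f h : F[X]}
    (hdeg : h.natDegree < f.natDegree) (s : Finset ι) (c γ : ι → E) :
    (∑ i ∈ s, C (c i) * polySubst φ h (γ i) * ∏ j ∈ s.erase i, polySubst φ f (γ j)).degree <
      (s.card * f.natDegree : ℕ) := by
  refine (degree_sum_le _ _).trans_lt ((Finset.sup_lt_iff (WithBot.bot_lt_coe _)).2 fun i hi => ?_)
  refine degree_le_natDegree.trans_lt (WithBot.coe_lt_coe.2 ?_)
  have hprod := natDegree_prod_polySubst_le φ (s.erase i) f γ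
  have hC := (natDegree_C_mul_le (c i) (polySubst φ h (γ i))).trans (natDegree_polySubst_le φ h _)
  have hcard : (s.erase i).card + 1 = s.card := Finset.card_erase_add_one hi
  calc _ ≤ h.natDegree + (s.erase i).card * f.natDegree :=
        natDegree_mul_le.trans (add_le_add hC hprod)
    _ < s.card * f.natDegree := by rw [← hcard]; nlinarith

theorem rescale_map_mul_coe_polySubst {A : PowerSeries F} {f h : F[X]} (hA : A * f = h) (γ : E) :
    PowerSeries.rescale γ (PowerSeries.map φ A) * (polySubst φ f γ : PowerSeries E) =
      polySubst φ h γ := by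
  rw [coe_polySubst, coe_polySubst, ← map_mul, ← map_mul, hA]

theorem coe_prod_polySubst_mul_sum_rescale {ι : Type*} [DecidableEq ι] {A : PowerSeries F}
    {f h : F[X]} (hA : A * f = h) (s : Finset ι) (c γ : ι → E) :
    ((∏ i ∈ s, polySubst φ f (γ i) : E[X]) : PowerSeries E) *
        ∑ i ∈ s, PowerSeries.C (c i) * PowerSeries.rescale (γ i) (PowerSeries.map φ A) =
      ((∑ i ∈ s, C (c i) * polySubst φ h (γ i) * ∏ j ∈ s.erase i, polySubst φ f (γ j) : E[X]) :
        PowerSeries E) := by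
  simp only [← coeToPowerSeries.ringHom_apply, map_sum, map_prod, map_mul, Finset.mul_sum]
  simp only [coeToPowerSeries.ringHom_apply, coe_C]
  refine Finset.sum_congr rfl fun i hi => ?_
  rw [← Finset.mul_prod_erase s (fun j => (polySubst φ f (γ j) : PowerSeries E)) hi,
    ← rescale_map_mul_coe_polySubst φ hA]
  ring

end PolySubst

theorem key_equation_unique_solution_general
    (F E : Type*) [Field F] [Field E] [Algebra F E]
    (n : ℕ) (hn : 0 < n) (α : E) (hα : orderOf α = n) (b : ℤ)
    (h f : Polynomial F)
    (hdeg : h.natDegree < f.natDegree)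
    (a : ℕ → F)
    (ha : (PowerSeries.mk a) * (f : PowerSeries F) = (h : PowerSeries F))
    (e : Polynomial F)
    (μ : ℕ)
    (ht : e.support.card * f.natDegree ≤ (μ - 1) / 2)
    (S Λ Ω : Polynomial E)
    (hS : S = ∑ j ∈ Finset.range (μ - 1),
      Polynomial.C (algebraMap F E (a j) *
        (e.map (algebraMap F E)).eval (α ^ (b + (j : ℤ)))) * Polynomial.X ^ j)
    (hΛ : Λ = ∏ i ∈ e.support, polySubst (algebraMap F E) f (α ^ (i : ℤ)))
    (hΩ : Ω = ∑ i ∈ e.support,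
      Polynomial.C (algebraMap F E (e.coeff i) * α ^ ((i : ℤ) * b)) *
        polySubst (algebraMap F E) h (α ^ (i : ℤ)) *
        ∏ j ∈ e.support.erase i, polySubst (algebraMap F E) f (α ^ (j : ℤ)))
    (lam om : Polynomial E)
    (hlamdeg : lam.natDegree ≤ (μ - 1) / 2)
    (homdeg : om.degree < lam.degree)
    (hke : (Polynomial.X : Polynomial E) ^ (μ - 1) ∣ lam * S - om) :
    lam * Ω = om * Λ := by
  have hα0 : α ≠ 0 := fun h0 => by
    rw [h0, orderOf_zero] at hα
    omega
  set φ := algebraMap F E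
  set T := ∑ i ∈ e.support, PowerSeries.C (φ (e.coeff i) * α ^ ((i : ℤ) * b)) *
    PowerSeries.rescale (α ^ (i : ℤ)) (PowerSeries.map φ (PowerSeries.mk a))
  have hΛT : (Λ : PowerSeries E) * T = Ω := by
    rw [hΛ, hΩ]
    exact coe_prod_polySubst_mul_sum_rescale φ ha _ _ _
  have hST : PowerSeries.X ^ (μ - 1) ∣ (S : PowerSeries E) - T := by
    refine PowerSeries.X_pow_dvd_iff.2 fun j hj => ?_
    rw [map_sub, sub_eq_zero, PowerSeries.coeff_sum_C_mul_rescale, ← eval_map_zpow_add φ e hα0,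
      hS, coeff_coe, coeff_sum_range_C_mul_X_pow _ hj, PowerSeries.coeff_map, PowerSeries.coeff_mk,
      mul_comm]
  have hlam : lam.degree ≤ ((μ - 1) / 2 : ℕ) :=
    degree_le_natDegree.trans (WithBot.coe_le_coe.2 hlamdeg)
  refine mul_eq_mul_of_X_pow_dvd_sub (Nat.mul_div_le _ _) ?_ ?_ hlam (homdeg.trans_le hlam) ?_ hke
  · rw [hΛ]
    exact degree_le_natDegree.trans
      (WithBot.coe_le_coe.2 ((natDegree_prod_polySubst_le φ _ f _).trans ht))
  · rw [hΩ]
    exact (degree_sum_mul_prod_erase_polySubst_lt φ hdeg _ _ _).trans_le (WithBot.coe_le_coe.2 ht)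
  · rw [X_pow_dvd_iff_coe, coe_sub, coe_mul, ← hΛT, ← mul_sub]
    exact hST.mul_left _

/-- Uniqueness part of Lemma 5 (Solving the Key Equation): if the number of
errors satisfies `t·u ≤ ⌊(μ−1)/2⌋`, then any solution `(lam, om)` of the key
equation with the stated degree constraints is proportional to `(Λ, Ω)`. -/
theorem key_equation_unique_solution
    (F E : Type*) [Field F] [Fintype F] [Field E] [Algebra F E]
    (n : ℕ) (hn : 0 < n) (α : E) (hα : orderOf α = n) (b : ℤ)
    (h f : Polynomial F) (hf0 : f.coeff 0 ≠ 0)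
    (hdeg : h.natDegree < f.natDegree)
    (a : ℕ → F)
    (ha : (PowerSeries.mk a) * (f : PowerSeries F) = (h : PowerSeries F))
    (e : Polynomial F) (hedeg : e.natDegree < n)
    (μ : ℕ) (hμ : 2 ≤ μ)
    (ht : e.support.card * f.natDegree ≤ (μ - 1) / 2)
    (S Λ Ω : Polynomial E)
    (hS : S = ∑ j ∈ Finset.range (μ - 1),
      Polynomial.C (algebraMap F E (a j) *
        (e.map (algebraMap F E)).eval (α ^ (b + (j : ℤ)))) * Polynomial.X ^ j)
    (hΛ : Λ = ∏ i ∈ e.support, polySubst (algebraMap F E) f (α ^ (i : ℤ)))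
    (hΩ : Ω = ∑ i ∈ e.support,
      Polynomial.C (algebraMap F E (e.coeff i) * α ^ ((i : ℤ) * b)) *
        polySubst (algebraMap F E) h (α ^ (i : ℤ)) *
        ∏ j ∈ e.support.erase i, polySubst (algebraMap F E) f (α ^ (j : ℤ)))
    (lam om : Polynomial E) (hlam0 : lam ≠ 0)
    (hlamdeg : lam.natDegree ≤ (μ - 1) / 2)
    (homdeg : om.degree < lam.degree)
    (hke : (Polynomial.X : Polynomial E) ^ (μ - 1) ∣ lam * S - om) :
    lam * Ω = om * Λ :=
  key_equation_unique_solution_general F E n hn α hα b h f hdeg a ha e μ ht S Λ Ω hS hΛ hΩ lam om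
    hlamdeg homdeg hke
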